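/- arXiv:1406.2752 — 2 statements merged into one kernel-verified Lean document; each statement's English description precedes it below -/
import Mathlib

section
/- In a fully-loaded two-tier network (association probabilities A_{D,m}+A_{D,s}=1), the overall DL coverage P̄_D(x) = A_m(x)·P_m(x) + A_s(x)·P_s(x), viewed as a function of the density ratio x = λ_s/λ_m with each per-tier coverage of the form a_i/(a_i + c_i·x_i) (x_m relative weight of cross/own interference), attains its maximum at x* = (q_m P_m^{2/α}δ(γ_m,α) + (1-q_m)(Q_mγ_m)^{2/α}C(α)) / (B̂^{2/α}(q_s P_s^{2/α}δ(γ_s,α) + (1-q_s)C(α)(Q_sγ_s)^{2/α})), obtained by solving dP̄_D/dx = 0. -/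
/-!
Write `s = A_s/A_m = q_s R x / q_m` for the ratio of the association probabilities, where
`R = (P_s B_s / (P_m B_m))^{2/α}`. Then `1/A_m = 1 + s`, `1/A_s = 1 + 1/s`, and each tier's
contribution `A_i P_i` collapses to `1/(a_i + 1/A_i)` with `a_i = (q_i δ_i + (1 - q_i) C k_i)/q_i`,
`k_i = (Q_i γ_i / P_i)^{2/α}`.
The overall coverage is therefore `1/(a + 1 + s) + 1/(b + 1 + 1/s)`, whose maximum over `s > 0`
sits at `s = a/b` (clearing denominators leaves a multiple of `(b s - a)²`); translated back to
`x`, this is `x*`.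
-/

open Real MeasureTheory Set

noncomputable def twoTierCoverage (a b s : ℝ) : ℝ :=
  1 / (a + (1 + s)) + 1 / (b + (1 + s⁻¹))

lemma twoTierCoverage_le {a b s : ℝ} (ha : 0 < a) (hb : 0 < b) (hs : 0 < s) :
    twoTierCoverage a b s ≤ twoTierCoverage a b (a / b) := by
  have hopt : twoTierCoverage a b (a / b) = (a + b) / (a * b + a + b) := by
    unfold twoTierCoverage
    field_simp
    ring
  rw [hopt, twoTierCoverage, div_add_div _ _ (by positivity) (by positivity),
    div_le_div_iff₀ (by positivity) (by positivity)]
  field_simp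
  nlinarith [mul_nonneg (mul_nonneg ha.le hs.le) (sq_nonneg (b * s - a)),
    mul_nonneg hs.le (sq_nonneg (b * s - a)), mul_pos ha hb]

lemma mul_tierCoverage {q A : ℝ} (hq : q ≠ 0) (hA : A ≠ 0) (d c k : ℝ) :
    A * (q / (q * A * d + (1 - q) * A * c * k + q)) =
      1 / ((q * d + (1 - q) * c * k) / q + A⁻¹) := by
  field_simp

lemma div_sin_pos_of_two_lt {α : ℝ} (hα : 2 < α) : 0 < 2 * π / α / sin (2 * π / α) := by
  have hθ : 0 < 2 * π / α := by positivity
  have hθπ : 2 * π / α < π := by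
    rw [div_lt_iff₀ (by linarith)]
    nlinarith [pi_pos]
  have := sin_pos_of_pos_of_lt_pi hθ hθπ
  positivity

lemma setIntegral_Ioi_div_one_add_rpow_nonneg {L c : ℝ} (hL : 0 ≤ L) (hc : 0 ≤ c) (r : ℝ) :
    0 ≤ ∫ u in Ioi L, c / (1 + u ^ r) :=
  setIntegral_nonneg measurableSet_Ioi fun u hu =>
    have : 0 ≤ u := hL.trans (le_of_lt hu)
    by positivity

lemma rpow_mul_eq_rpow_mul_rpow_div_mul {P Q γ : ℝ} (hP : 0 < P) (hQ : 0 ≤ Q) (hγ : 0 ≤ γ)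
    (p : ℝ) : (Q * γ) ^ p = P ^ p * (Q / P * γ) ^ p := by
  rw [← mul_rpow hP.le (by positivity)]
  congr 1
  field_simp

lemma inv_assoc_macro {qm qs R : ℝ} (hqm : qm ≠ 0) (y : ℝ) :
    (qm / (qm + qs * y * R))⁻¹ = 1 + qs * R * y / qm := by
  rw [inv_div, add_div, div_self hqm]
  ring

lemma inv_assoc_small {qm qs R y : ℝ} (hqs : qs ≠ 0) (hR : R ≠ 0) (hy : y ≠ 0) :
    (qs * y / (qs * y + qm * R⁻¹))⁻¹ = 1 + (qs * R * y / qm)⁻¹ := by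
  rw [inv_div, add_div, div_self (by positivity), inv_div]
  field_simp
lemma optimalRatio_eq {p qm qs Pm Ps Qm Qs Bm Bs γm γs dm ds C : ℝ} (hPm : 0 < Pm) (hPs : 0 < Ps)
    (hQm : 0 ≤ Qm) (hQs : 0 ≤ Qs) (hBm : 0 < Bm) (hBs : 0 < Bs) (hγm : 0 ≤ γm) (hγs : 0 ≤ γs) :
    (qm * Pm ^ p * dm + (1 - qm) * (Qm * γm) ^ p * C) /
        ((Bs / Bm) ^ p * (qs * Ps ^ p * ds + (1 - qs) * C * (Qs * γs) ^ p)) =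
      (qm * dm + (1 - qm) * C * (Qm / Pm * γm) ^ p) /
        ((Ps * Bs / (Pm * Bm)) ^ p * (qs * ds + (1 - qs) * C * (Qs / Ps * γs) ^ p)) := by
  have hR : (Ps * Bs / (Pm * Bm)) ^ p = (Bs / Bm) ^ p * Ps ^ p / Pm ^ p := by
    rw [← mul_rpow (by positivity) hPs.le, ← div_rpow (by positivity) hPm.le]
    congr 1
    field_simp
  rw [hR, rpow_mul_eq_rpow_mul_rpow_div_mul hPm hQm hγm,
    rpow_mul_eq_rpow_mul_rpow_div_mul hPs hQs hγs]
  field_simp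

/-- In a fully-loaded two-tier dynamic TDD network, the overall DL coverage
`P̄_D(x) = A_m(x)P_m(x) + A_s(x)P_s(x)`, as a function of the density ratio
`x = λ_s/λ_m`, is maximized at
`x* = (q_m P_m^{2/α}δ(γ_m,α) + (1-q_m)(Q_mγ_m)^{2/α}C(α)) /
     (B̂^{2/α}(q_s P_s^{2/α}δ(γ_s,α) + (1-q_s)C(α)(Q_sγ_s)^{2/α}))`. -/
theorem stmt15 (α qm qs Pm Ps Qm Qs Bm Bs γm γs : ℝ) (hα : 2 < α)
    (hqm : qm ∈ Set.Ioo (0:ℝ) 1) (hqs : qs ∈ Set.Ioo (0:ℝ) 1)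
    (hPm : 0 < Pm) (hPs : 0 < Ps) (hQm : 0 < Qm) (hQs : 0 < Qs)
    (hBm : 0 < Bm) (hBs : 0 < Bs) (hγm : 0 < γm) (hγs : 0 < γs) :
    let δ : ℝ → ℝ := fun γ =>
      ∫ u in Set.Ioi (γ ^ (-(2 / α))), γ ^ (2 / α) / (1 + u ^ (α / 2))
    let C : ℝ := (2 * π / α) / Real.sin (2 * π / α)
    let Am : ℝ → ℝ := fun x => qm / (qm + qs * x * ((Ps * Bs) / (Pm * Bm)) ^ (2 / α))
    let As : ℝ → ℝ := fun x => qs * x / (qs * x + qm * ((Pm * Bm) / (Ps * Bs)) ^ (2 / α))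
    let covM : ℝ → ℝ := fun x =>
      qm / (qm * Am x * δ γm + (1 - qm) * Am x * C * ((Qm / Pm) * γm) ^ (2 / α) + qm)
    let covS : ℝ → ℝ := fun x =>
      qs / (qs * As x * δ γs + (1 - qs) * As x * C * ((Qs / Ps) * γs) ^ (2 / α) + qs)
    let Pbar : ℝ → ℝ := fun x => Am x * covM x + As x * covS x
    let xstar : ℝ :=
      (qm * Pm ^ (2 / α) * δ γm + (1 - qm) * (Qm * γm) ^ (2 / α) * C) /
        ((Bs / Bm) ^ (2 / α) *
          (qs * Ps ^ (2 / α) * δ γs + (1 - qs) * C * (Qs * γs) ^ (2 / α)))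
    ∀ x : ℝ, 0 < x → Pbar x ≤ Pbar xstar := by
  intro δ C Am As covM covS Pbar xstar x hx
  obtain ⟨hqm0, hqm1⟩ := hqm
  obtain ⟨hqs0, hqs1⟩ := hqs
  set R := (Ps * Bs / (Pm * Bm)) ^ (2 / α) with hR_def
  set Dm := qm * δ γm + (1 - qm) * C * (Qm / Pm * γm) ^ (2 / α)
  set Ds := qs * δ γs + (1 - qs) * C * (Qs / Ps * γs) ^ (2 / α)
  have hR : 0 < R := by positivity
  have hC : 0 < C := div_sin_pos_of_two_lt hα
  have hδ : ∀ γ, 0 < γ → 0 ≤ δ γ := fun γ hγ =>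
    setIntegral_Ioi_div_one_add_rpow_nonneg (by positivity) (by positivity) _
  have hDm : 0 < Dm := by have := hδ γm hγm; positivity
  have hDs : 0 < Ds := by have := hδ γs hγs; positivity
  have hPbar : ∀ y, 0 < y → Pbar y = twoTierCoverage (Dm / qm) (Ds / qs) (qs * R * y / qm) := by
    intro y hy
    have hR' : (Pm * Bm / (Ps * Bs)) ^ (2 / α) = R⁻¹ := by
      rw [← inv_div, inv_rpow (by positivity)]
    simp only [Pbar, covM, covS, Am, As, hR', ← hR_def]
    rw [mul_tierCoverage hqm0.ne' (by positivity), mul_tierCoverage hqs0.ne' (by positivity),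
      inv_assoc_macro hqm0.ne', inv_assoc_small hqs0.ne' hR.ne' hy.ne']
    rfl
  have hxstar : xstar = Dm / (R * Ds) :=
    optimalRatio_eq hPm hPs hQm.le hQs.le hBm hBs hγm.le hγs.le
  have hs_opt : qs * R * xstar / qm = Dm / qm / (Ds / qs) := by
    rw [hxstar]
    field_simp
  rw [hPbar x hx, hPbar xstar (by rw [hxstar]; positivity), hs_opt]
  exact twoTierCoverage_le (by positivity) (by positivity) (by positivity)
end

section
/- Let Φ be a PPP of density λ on ℝ², let o be the origin and y₀ a point with ‖y₀‖ ≤ ι. The Laplace transform at s > 0 of I = Σ_{z∈Φ, z∉B(y₀,ι), ‖z‖≤‖y₀‖+ι} Q·h_z·‖z‖^{-α} (Exp(1) fading) equals exp(-2λ∫_0^π∫_{ℓ(θ)}^{ι+‖y₀‖} y/(1+y^α/(sQ)) dy dθ), where ℓ(θ) = √(ι² - (‖y₀‖ sin θ)²) + ‖y₀‖ cos θ. -/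
/-! An isometry fixing the origin moves `y₀` to the point `‖y₀‖` of the positive real axis of `ℂ`
and preserves the radial integrand. Since the origin lies in the excluded disc, in polar
coordinates `(r, θ)` the region becomes `ℓ(θ) < r ≤ ‖y₀‖ + ι`, where `ℓ(θ)` is the exit distance
of the ray of angle `θ` from that disc. Fubini and the symmetry `θ ↦ -θ` give `2 ∫_0^π`, and
`r (1 - 1 / (1 + sQ r^{-α})) = r / (1 + r^α / (sQ))`. -/

open Real MeasureTheory Set Metric

theorem exists_linearIsometryEquiv_apply_eq_of_norm_eq {F : Type*} [NormedAddCommGroup F]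
    [InnerProductSpace ℝ F] {x y : F} (h : ‖x‖ = ‖y‖) :
    ∃ e : F ≃ₗᵢ[ℝ] F, e x = y :=
  ⟨(ℝ ∙ (x - y))ᗮ.reflection, Submodule.reflection_sub h⟩

theorem LinearIsometryEquiv.setIntegral_preimage_norm {E F G : Type*}
    [NormedAddCommGroup E] [InnerProductSpace ℝ E] [FiniteDimensional ℝ E]
    [MeasurableSpace E] [BorelSpace E] [NormedAddCommGroup F] [InnerProductSpace ℝ F]
    [FiniteDimensional ℝ F] [MeasurableSpace F] [BorelSpace F]
    [NormedAddCommGroup G] [NormedSpace ℝ G] (e : E ≃ₗᵢ[ℝ] F) (f : ℝ → G) (s : Set F) :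
    ∫ z in e ⁻¹' s, f ‖z‖ = ∫ w in s, f ‖w‖ := by
  simpa only [LinearIsometryEquiv.norm_map] using
    e.measurePreserving.setIntegral_preimage_emb e.toHomeomorph.measurableEmbedding
      (fun w ↦ f ‖w‖) s

theorem Function.Even.intervalIntegral_neg_eq_two_nsmul {E : Type*} [NormedAddCommGroup E]
    [NormedSpace ℝ E] {f : ℝ → E} {a : ℝ} (hf : Function.Even f)
    (hfi : IntervalIntegrable f volume 0 a) :
    ∫ x in -a..a, f x = 2 • ∫ x in 0..a, f x := by
  have hf' : (fun x ↦ f (-x)) = f := funext hf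
  have hfi' : IntervalIntegrable f volume (-a) 0 := by
    simpa [hf'] using ((IntervalIntegrable.iff_comp_neg).mp hfi).symm
  have hleft : ∫ x in -a..0, f x = ∫ x in 0..a, f x := by
    simpa [hf'] using (intervalIntegral.integral_comp_neg (a := 0) (b := a) f).symm
  rw [← intervalIntegral.integral_add_adjacent_intervals hfi' hfi, hleft, two_nsmul]

theorem Complex.dist_polarCoord_symm_ofReal_sq (p : ℝ × ℝ) (r₀ : ℝ) :
    dist (Complex.polarCoord.symm p) r₀ ^ 2 = p.1 ^ 2 - 2 * p.1 * r₀ * Real.cos p.2 + r₀ ^ 2 := by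
  rw [Complex.dist_eq, Complex.sq_norm, Complex.normSq_apply]
  simp only [Complex.polarCoord_symm_apply, Complex.sub_re, Complex.sub_im, Complex.mul_re,
    Complex.mul_im, Complex.add_re, Complex.add_im, Complex.ofReal_re, Complex.ofReal_im,
    Complex.I_re, Complex.I_im]
  linear_combination p.1 ^ 2 * Real.sin_sq_add_cos_sq p.2

/-- The paper's `ℓ(θ)`: for `0 ≤ r₀ ≤ ι`, the ray from the origin at angle `θ` leaves the disc
`closedBall (r₀ : ℂ) ι` at distance `rayExitDist ι r₀ θ`. -/
noncomputable def rayExitDist (ι r₀ θ : ℝ) : ℝ := √(ι ^ 2 - (r₀ * sin θ) ^ 2) + r₀ * cos θ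

section rayExitDist

variable {ι r₀ : ℝ}

theorem continuous_rayExitDist : Continuous (rayExitDist ι r₀) := by
  unfold rayExitDist
  fun_prop

theorem rayExitDist_even : Function.Even (rayExitDist ι r₀) := fun θ ↦ by
  simp [rayExitDist]

theorem sq_mul_cos_le_sub_sq_mul_sin (h₀ : 0 ≤ r₀) (h : r₀ ≤ ι) (θ : ℝ) :
    (r₀ * cos θ) ^ 2 ≤ ι ^ 2 - (r₀ * sin θ) ^ 2 := by
  nlinarith [sin_sq_add_cos_sq θ, mul_self_le_mul_self h₀ h]

theorem rayExitDist_nonneg (h₀ : 0 ≤ r₀) (h : r₀ ≤ ι) (θ : ℝ) : 0 ≤ rayExitDist ι r₀ θ := by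
  have := Real.abs_le_sqrt (sq_mul_cos_le_sub_sq_mul_sin h₀ h θ)
  unfold rayExitDist
  linarith [neg_abs_le (r₀ * cos θ)]

theorem rayExitDist_le (h₀ : 0 ≤ r₀) (hι : 0 ≤ ι) (θ : ℝ) : rayExitDist ι r₀ θ ≤ r₀ + ι := by
  have hsqrt : √(ι ^ 2 - (r₀ * sin θ) ^ 2) ≤ ι :=
    Real.sqrt_le_iff.mpr ⟨hι, by nlinarith [sq_nonneg (r₀ * sin θ)]⟩
  have hcos : r₀ * cos θ ≤ r₀ := mul_le_of_le_one_right h₀ (cos_le_one θ)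
  unfold rayExitDist
  linarith

theorem rayExitDist_lt_iff (h₀ : 0 ≤ r₀) (h : r₀ ≤ ι) {r θ : ℝ} (hr : 0 ≤ r) :
    rayExitDist ι r₀ θ < r ↔ ι ^ 2 < r ^ 2 - 2 * r * r₀ * cos θ + r₀ ^ 2 := by
  have hD := sq_mul_cos_le_sub_sq_mul_sin h₀ h θ
  have hcos_sq : ι ^ 2 < r ^ 2 - 2 * r * r₀ * cos θ + r₀ ^ 2 ↔
      ι ^ 2 - (r₀ * sin θ) ^ 2 < (r - r₀ * cos θ) ^ 2 := by
    constructor <;> intro <;> nlinarith [sin_sq_add_cos_sq θ]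
  rw [hcos_sq, rayExitDist, ← lt_sub_iff_add_lt]
  constructor
  · intro hlt
    exact (Real.sqrt_lt' (lt_of_le_of_lt (Real.sqrt_nonneg _) hlt)).mp hlt
  · intro hlt
    -- the other root `r₀ cos θ - √(…)` of the quadratic in `r` is `≤ 0`
    have hpos : 0 < r - r₀ * cos θ := by
      by_contra! hneg
      nlinarith [abs_le.mp (Real.abs_le_sqrt hD), Real.sqrt_nonneg (ι ^ 2 - (r₀ * sin θ) ^ 2)]
    exact (Real.sqrt_lt' hpos).mpr hlt

theorem polarCoord_symm_mem_closedBall_diff_iff (h₀ : 0 ≤ r₀) (h : r₀ ≤ ι) {p : ℝ × ℝ}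
    (hp : 0 < p.1) :
    Complex.polarCoord.symm p ∈ closedBall 0 (r₀ + ι) \ closedBall (r₀ : ℂ) ι ↔
      p.1 ∈ Ioc (rayExitDist ι r₀ p.2) (r₀ + ι) := by
  rw [mem_sdiff, mem_closedBall, mem_closedBall, not_le, dist_zero_right,
    Complex.norm_polarCoord_symm, abs_of_pos hp, ← sq_lt_sq₀ (h₀.trans h) dist_nonneg,
    Complex.dist_polarCoord_symm_ofReal_sq, ← rayExitDist_lt_iff h₀ h hp.le, mem_Ioc, and_comm]

end rayExitDist

section polarRegion

variable {ι r₀ : ℝ}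

def polarRegion (ι r₀ : ℝ) : Set (ℝ × ℝ) := {p | p.1 ∈ Ioc (rayExitDist ι r₀ p.2) (r₀ + ι)}

theorem measurableSet_polarRegion : MeasurableSet (polarRegion ι r₀) :=
  (measurableSet_lt (continuous_rayExitDist.measurable.comp measurable_snd) measurable_fst).inter
    (measurableSet_le measurable_fst measurable_const)

theorem setIntegral_closedBall_diff_closedBall_eq_polar (f : ℝ → ℝ) (h₀ : 0 ≤ r₀) (h : r₀ ≤ ι) :
    ∫ z in closedBall (0 : ℂ) (r₀ + ι) \ closedBall (r₀ : ℂ) ι, f ‖z‖ =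
      ∫ p in Complex.polarCoord.target, (polarRegion ι r₀).indicator (fun p ↦ p.1 * f p.1) p := by
  rw [← integral_indicator (measurableSet_closedBall.diff measurableSet_closedBall),
    ← Complex.integral_comp_polarCoord_symm]
  refine setIntegral_congr_fun Complex.polarCoord.open_target.measurableSet fun p hp ↦ ?_
  have hp₁ : 0 < p.1 := hp.1
  have hmem := polarCoord_symm_mem_closedBall_diff_iff h₀ h hp₁
  by_cases hpA : p ∈ polarRegion ι r₀
  · rw [indicator_of_mem (hmem.mpr hpA), indicator_of_mem hpA, Complex.norm_polarCoord_symm,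
      abs_of_pos hp₁, smul_eq_mul]
  · rw [indicator_of_notMem (mt hmem.mp hpA), indicator_of_notMem hpA, smul_zero]

theorem integrable_indicator_polarRegion {f : ℝ → ℝ}
    (hf : IntegrableOn (fun r ↦ r * f r) (Ioc 0 (r₀ + ι))) :
    Integrable ((polarRegion ι r₀).indicator fun p ↦ p.1 * f p.1)
      ((volume.restrict (Ioi 0)).prod (volume.restrict (Ioo (-π) π))) := by
  have hbox : IntegrableOn (fun p : ℝ × ℝ ↦ p.1 * f p.1) (Ioc 0 (r₀ + ι) ×ˢ Ioo (-π) π) := by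
    rw [IntegrableOn, Measure.volume_eq_prod, ← Measure.prod_restrict]
    exact hf.comp_fst _
  rw [Measure.prod_restrict, ← Measure.volume_eq_prod]
  refine (hbox.indicator measurableSet_polarRegion).of_forall_sdiff_eq_zero
    (measurableSet_Ioi.prod measurableSet_Ioo) ?_
  rintro p ⟨⟨hp₁, hp₂⟩, hp_box⟩
  exact indicator_of_notMem (fun hp ↦ hp_box ⟨⟨hp₁, hp.2⟩, hp₂⟩) _

theorem integral_Ioi_indicator_polarRegion (f : ℝ → ℝ) (h₀ : 0 ≤ r₀) (h : r₀ ≤ ι) (θ : ℝ) :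
    ∫ r in Ioi 0, (polarRegion ι r₀).indicator (fun p ↦ p.1 * f p.1) (r, θ) =
      ∫ r in rayExitDist ι r₀ θ..(r₀ + ι), r * f r := by
  have hsub : Ioc (rayExitDist ι r₀ θ) (r₀ + ι) ⊆ Ioi 0 :=
    Ioc_subset_Ioi_self.trans (Ioi_subset_Ioi (rayExitDist_nonneg h₀ h θ))
  rw [intervalIntegral.integral_of_le (rayExitDist_le h₀ (h₀.trans h) θ),
    ← inter_eq_right.mpr hsub, ← setIntegral_indicator measurableSet_Ioc]
  rfl

theorem setIntegral_closedBall_diff_closedBall_ofReal (f : ℝ → ℝ) (h₀ : 0 ≤ r₀) (h : r₀ ≤ ι)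
    (hf : IntegrableOn (fun r ↦ r * f r) (Ioc 0 (r₀ + ι))) :
    ∫ z in closedBall (0 : ℂ) (r₀ + ι) \ closedBall (r₀ : ℂ) ι, f ‖z‖ =
      2 * ∫ θ in 0..π, ∫ r in rayExitDist ι r₀ θ..(r₀ + ι), r * f r := by
  set G : ℝ → ℝ := fun θ ↦ ∫ r in rayExitDist ι r₀ θ..(r₀ + ι), r * f r
  have hg := integrable_indicator_polarRegion hf
  have hsection := integral_Ioi_indicator_polarRegion f h₀ h
  have hfubini : ∫ p in Complex.polarCoord.target,
      (polarRegion ι r₀).indicator (fun p ↦ p.1 * f p.1) p = ∫ θ in Ioo (-π) π, G θ := by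
    rw [Complex.polarCoord_target, Measure.volume_eq_prod, ← Measure.prod_restrict,
      integral_prod_symm _ hg]
    simp only [hsection, G]
  have hG : IntervalIntegrable G volume 0 π := by
    have hG_Ioo : Integrable G (volume.restrict (Ioo (-π) π)) := by
      simpa only [hsection] using hg.integral_prod_right
    have hG_Ioc : IntegrableOn G (Ioc (-π) π) := (integrableOn_Ioc_iff_integrableOn_Ioo).mpr hG_Ioo
    exact (intervalIntegrable_iff_integrableOn_Ioc_of_le pi_pos.le).mpr
      (hG_Ioc.mono_set (Ioc_subset_Ioc_left (by linarith [pi_pos])))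
  have hG_even : Function.Even G := fun θ ↦ by simp only [G, rayExitDist_even θ]
  rw [setIntegral_closedBall_diff_closedBall_eq_polar f h₀ h, hfubini,
    ← integral_Ioc_eq_integral_Ioo, ← intervalIntegral.integral_of_le (by linarith [pi_pos]),
    hG_even.intervalIntegral_neg_eq_two_nsmul hG, nsmul_eq_mul, Nat.cast_ofNat]

end polarRegion

theorem mul_one_sub_one_div_one_add_rpow_neg {c r : ℝ} (α : ℝ) (hc : 0 < c) (hr : 0 ≤ r) :
    r * (1 - 1 / (1 + c * r ^ (-α))) = r / (1 + r ^ α / c) := by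
  rcases hr.eq_or_lt with rfl | hr
  · simp
  have hrα : 0 < r ^ α := rpow_pos_of_pos hr α
  rw [rpow_neg hr.le]
  field_simp
  ring

theorem integrableOn_mul_one_sub_one_div_one_add_rpow_neg {c : ℝ} (α R : ℝ) (hc : 0 ≤ c) :
    IntegrableOn (fun r ↦ r * (1 - 1 / (1 + c * r ^ (-α)))) (Ioc 0 R) := by
  refine Measure.integrableOn_of_bounded (M := R) measure_Ioc_lt_top.ne (by fun_prop) ?_
  filter_upwards [ae_restrict_mem measurableSet_Ioc] with r ⟨hr, hrR⟩
  have hx : 0 ≤ c * r ^ (-α) := mul_nonneg hc (rpow_nonneg hr.le _)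
  have hle : 1 / (1 + c * r ^ (-α)) ≤ 1 := div_le_one_of_le₀ (by linarith) (by linarith)
  have hnn : 0 ≤ 1 / (1 + c * r ^ (-α)) := by positivity
  rw [Real.norm_eq_abs, abs_le]
  constructor <;> nlinarith

theorem stmt18_general (lam s Q ι α : ℝ) (y₀ : EuclideanSpace ℝ (Fin 2))
    (hs : 0 < s) (hQ : 0 < Q)
    (hy : ‖y₀‖ ≤ ι) :
    Real.exp (-lam *
        ∫ z in {z : EuclideanSpace ℝ (Fin 2) | ι < dist z y₀ ∧ ‖z‖ ≤ ‖y₀‖ + ι},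
          (1 - 1 / (1 + s * Q * ‖z‖ ^ (-α))))
      = Real.exp (-2 * lam *
          ∫ θ in (0:ℝ)..π,
            ∫ y in (Real.sqrt (ι ^ 2 - (‖y₀‖ * Real.sin θ) ^ 2) + ‖y₀‖ * Real.cos θ)..(ι + ‖y₀‖),
              y / (1 + y ^ α / (s * Q))) := by
  obtain ⟨e, he⟩ : ∃ e : EuclideanSpace ℝ (Fin 2) ≃ₗᵢ[ℝ] ℂ, e y₀ = ‖y₀‖ := by
    obtain ⟨e', he'⟩ := exists_linearIsometryEquiv_apply_eq_of_norm_eq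
      (x := Complex.orthonormalBasisOneI.repr.symm y₀) (y := (‖y₀‖ : ℂ)) (by rw [LinearIsometryEquiv.norm_map, Complex.norm_real, norm_norm])
    exact ⟨Complex.orthonormalBasisOneI.repr.symm.trans e', he'⟩
  have hregion : {z | ι < dist z y₀ ∧ ‖z‖ ≤ ‖y₀‖ + ι} =
      e ⁻¹' (closedBall 0 (‖y₀‖ + ι) \ closedBall (‖y₀‖ : ℂ) ι) := by
    ext z
    simp [← he, and_comm]
  have hkernel (θ : ℝ) :
      ∫ r in rayExitDist ι ‖y₀‖ θ..(‖y₀‖ + ι), r * (1 - 1 / (1 + s * Q * r ^ (-α))) =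
        ∫ y in rayExitDist ι ‖y₀‖ θ..(ι + ‖y₀‖), y / (1 + y ^ α / (s * Q)) := by
    rw [add_comm ‖y₀‖]
    refine intervalIntegral.integral_congr fun r hr ↦ ?_
    have hr₀ : 0 ≤ r :=
      (le_min (rayExitDist_nonneg (norm_nonneg y₀) hy θ) (by linarith [norm_nonneg y₀])).trans hr.1
    exact mul_one_sub_one_div_one_add_rpow_neg α (by positivity) hr₀
  rw [hregion, e.setIntegral_preimage_norm (fun r ↦ 1 - 1 / (1 + s * Q * r ^ (-α))),
    setIntegral_closedBall_diff_closedBall_ofReal _ (norm_nonneg y₀) hy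
      (integrableOn_mul_one_sub_one_div_one_add_rpow_neg α _ (by positivity))]
  simp only [hkernel]
  rw [show -2 * lam = -lam * 2 by ring, mul_assoc]
  rfl

/-- Inner-region Laplace transform (case `‖y₀‖ ≤ ι`): by the PGFL, the Laplace
transform of the interference from PPP points in `B(0,‖y₀‖+ι) \ B(y₀,ι)` equals
`exp(-2λ∫_0^π∫_{ℓ(θ)}^{ι+‖y₀‖} y/(1+y^α/(sQ)) dy dθ)` with
`ℓ(θ) = √(ι² - (‖y₀‖sin θ)²) + ‖y₀‖cos θ`. -/
theorem stmt18 (lam s Q ι α : ℝ) (y₀ : EuclideanSpace ℝ (Fin 2))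
    (hlam : 0 < lam) (hs : 0 < s) (hQ : 0 < Q) (hι : 0 < ι) (hα : 2 < α)
    (hy : ‖y₀‖ ≤ ι) :
    Real.exp (-lam *
        ∫ z in {z : EuclideanSpace ℝ (Fin 2) | ι < dist z y₀ ∧ ‖z‖ ≤ ‖y₀‖ + ι},
          (1 - 1 / (1 + s * Q * ‖z‖ ^ (-α))))
      = Real.exp (-2 * lam *
          ∫ θ in (0:ℝ)..π,
            ∫ y in (Real.sqrt (ι ^ 2 - (‖y₀‖ * Real.sin θ) ^ 2) + ‖y₀‖ * Real.cos θ)..(ι + ‖y₀‖),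
              y / (1 + y ^ α / (s * Q))) :=
  stmt18_general lam s Q ι α y₀ hs hQ hy
end
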